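/- arXiv:1709.05105 — 2 statements merged into one kernel-verified Lean document; each statement's English description precedes it below -/
import Mathlib

section
/- Let Σ be a finite nonempty alphabet, k ∈ ℕ, Γ ⊆ P(Σ^{[k]}) a one-dimensional semiconstrained system, and d, n ∈ ℕ with B_n(Γ^⊗d) nonempty. Then for every i ∈ [d] and every A ⊆ F_n^d, Σ_{v∈F_n^d} E_y[ ‖π_{[k]e_i+v}(η_{y,A}) − π_{[k]e_i+v}(μ_{y,A})‖_TV ] ≤ Σ_{v∈F_n^d} Σ_{j∈[k]} E_y[ ‖π_{{v}}(η_{y,A}) − π_{{v}}(μ_{y, A∪([−j]e_i+v)})‖_TV ], where E_y denotes expectation with respect to y drawn according to the uniform measure μ^{n,d} on B_n(Γ^⊗d), and coordinates are taken modulo n. -/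
open scoped BigOperators
open Filter

noncomputable section

namespace SCS

/-- Probability measures on a finite type, as normalized nonnegative functions. -/
def PM (X : Type*) [Fintype X] : Type _ :=
  {f : X → ℝ // (∀ x, 0 ≤ f x) ∧ ∑ x, f x = 1}

variable {X Y : Type*} [Fintype X] [Fintype Y]

/-- Pushforward of a finite probability measure under a map. -/
def push [DecidableEq Y] (f : X → Y) (μ : PM X) : PM Y :=
  ⟨fun y => ∑ x ∈ Finset.univ.filter fun x => f x = y, μ.1 x,
    fun y => Finset.sum_nonneg fun x _ => μ.2.1 x,
    by rw [Finset.sum_fiberwise Finset.univ f μ.1]; exact μ.2.2⟩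

/-- Total variation distance between finite probability measures. -/
def tv (μ ν : PM X) : ℝ :=
  ⨆ W : Finset X, |∑ x ∈ W, μ.1 x - ∑ x ∈ W, ν.1 x|

/-- The closed `ε`-ball around a set of measures:
`μ` is in the ball iff the infimum of TV-distances from `μ` to `Γ` is at most `ε`. -/
def ball (Γ : Set (PM X)) (ε : ℝ) : Set (PM X) :=
  {μ | ∀ ε' > ε, ∃ ν ∈ Γ, tv μ ν < ε'}

/-- Base-2 entropy of a finite probability measure. -/
def entropy (μ : PM X) : ℝ := -∑ x, μ.1 x * Real.logb 2 (μ.1 x)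

/-- The uniform measure. -/
def uniformPM (X : Type*) [Fintype X] [Nonempty X] : PM X :=
  ⟨fun _ => (Fintype.card X : ℝ)⁻¹, fun _ => by positivity, by
    have h : (Fintype.card X : ℝ) ≠ 0 := Nat.cast_ne_zero.mpr Fintype.card_ne_zero
    simp [Finset.sum_const, Finset.card_univ, nsmul_eq_mul, mul_inv_cancel₀ h]⟩

open Classical in
/-- The uniform measure on a finset (junk value if the finset is empty). -/
def uniformOn [Nonempty X] (s : Finset X) : PM X :=
  if h : s.Nonempty then
    ⟨fun x => if x ∈ s then (s.card : ℝ)⁻¹ else 0,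
      fun x => by dsimp only; split <;> positivity,
      by
        have hc : (s.card : ℝ) ≠ 0 := ne_of_gt (by exact_mod_cast Finset.card_pos.mpr h)
        rw [Finset.sum_ite_mem, Finset.univ_inter, Finset.sum_const, nsmul_eq_mul,
          mul_inv_cancel₀ hc]⟩
  else uniformPM X

/-- Convex combination of two measures. -/
def mix (t : ℝ) (h0 : 0 ≤ t) (h1 : t ≤ 1) (μ ν : PM X) : PM X :=
  ⟨fun x => t * μ.1 x + (1 - t) * ν.1 x,
    fun x => add_nonneg (mul_nonneg h0 (μ.2.1 x)) (mul_nonneg (by linarith) (ν.2.1 x)),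
    by rw [Finset.sum_add_distrib, ← Finset.mul_sum, ← Finset.mul_sum, μ.2.2, ν.2.2]; ring⟩

/-- Convexity of a set of measures. -/
def IsConvexPM (Γ : Set (PM X)) : Prop :=
  ∀ μ ∈ Γ, ∀ ν ∈ Γ, ∀ t, ∀ (h0 : 0 ≤ t) (h1 : t ≤ 1), mix t h0 h1 μ ν ∈ Γ

open Classical in
/-- Average of a finite family of measures (junk value for an empty family). -/
def avgPM {ι : Type*} [Fintype ι] (X : Type*) [Fintype X] [Nonempty X] (f : ι → PM X) : PM X :=
  if h : Nonempty ι then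
    ⟨fun x => (∑ i, (f i).1 x) / Fintype.card ι,
      fun x => div_nonneg (Finset.sum_nonneg fun i _ => (f i).2.1 x) (Nat.cast_nonneg _),
      by
        haveI := h
        have hc : (Fintype.card ι : ℝ) ≠ 0 := Nat.cast_ne_zero.mpr Fintype.card_ne_zero
        rw [← Finset.sum_div, Finset.sum_comm, Finset.sum_congr rfl fun i _ => (f i).2.2,
          Finset.sum_const, Finset.card_univ, nsmul_eq_mul, mul_one, div_self hc]⟩
  else uniformPM X

/-- Product measure with given single-site marginals. -/
def prodPM {ι : Type*} [Fintype ι] [DecidableEq ι] {A : Type*} [Fintype A] (p : ι → PM A) :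
    PM (ι → A) :=
  ⟨fun w => ∏ i, (p i).1 (w i),
    fun w => Finset.prod_nonneg fun i _ => (p i).2.1 _,
    by
      classical
      rw [show (Finset.univ : Finset (ι → A)) = Fintype.piFinset fun _ => Finset.univ from
        (Fintype.piFinset_univ).symm, ← Finset.prod_univ_sum]
      exact Finset.prod_eq_one fun i _ => (p i).2.2⟩

variable {A : Type*} [Fintype A] [DecidableEq A] [Nonempty A]

/-- Single-site marginal of a measure on words. -/
def site {ι : Type*} [Fintype ι] [DecidableEq ι] (μ : PM (ι → A)) (i : ι) : PM A :=
  push (fun w => w i) μ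

/-- A measure on words is a product (independent) measure. -/
def IsProduct {ι : Type*} [Fintype ι] [DecidableEq ι] (μ : PM (ι → A)) : Prop :=
  ∀ w, μ.1 w = ∏ i, (site μ i).1 (w i)

/-- Cyclic (mod `n`) addition of an integer vector to a point of `F_n^d`. -/
def cycAdd {d n : ℕ} (v : Fin d → Fin n) (u : Fin d → ℤ) : Fin d → Fin n := fun i =>
  ⟨(((v i : ℤ) + u i) % (n : ℤ)).toNat, by
    have h0 : 0 < n := (v i).pos
    have h1 : (0 : ℤ) < (n : ℤ) := by exact_mod_cast h0
    have h2 := Int.emod_nonneg ((v i : ℤ) + u i) (by omega : (n : ℤ) ≠ 0)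
    have h3 := Int.emod_lt_of_pos ((v i : ℤ) + u i) h1
    omega⟩

/-- The marginal of a measure on `Σ^{F_n^d}` on the coordinates `g(T) + v` (mod `n`),
viewed as a measure on `Σ^T`. -/
def margAlong {d n : ℕ} (μ : PM ((Fin d → Fin n) → A)) {T : Type*} [Fintype T] [DecidableEq T]
    (g : T → (Fin d → ℤ)) (v : Fin d → Fin n) : PM (T → A) :=
  push (fun w t => w (cycAdd v (g t))) μ

/-- `π̂`: the average over all translates of the `g`-marginal. -/
def avgMarg {d n : ℕ} (μ : PM ((Fin d → Fin n) → A)) {T : Type*} [Fintype T] [DecidableEq T]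
    (g : T → (Fin d → ℤ)) : PM (T → A) :=
  avgPM _ fun v : Fin d → Fin n => margAlong μ g v

/-- The empirical distribution of `g`-patterns in the word `w`, with positions mod `n`. -/
def empAlong {d n : ℕ} (w : (Fin d → Fin n) → A) {T : Type*} [Fintype T] [DecidableEq T]
    (g : T → (Fin d → ℤ)) : PM (T → A) := by
  by_cases h : Nonempty (Fin d → Fin n)
  · exact push (fun v t => w (cycAdd v (g t))) (uniformPM _)
  · exact uniformPM _

open Classical in
/-- The admissible `n`-blocks of the semiconstrained system `Γ` (patterns indexed by `T`
via `g : T → ℤ^d`). -/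
def blocksG {d : ℕ} {T : Type*} [Fintype T] [DecidableEq T] (g : T → (Fin d → ℤ))
    (Γ : Set (PM (T → A))) (n : ℕ) : Finset ((Fin d → Fin n) → A) :=
  Finset.univ.filter fun w => empAlong w g ∈ Γ

/-- The capacity of a semiconstrained system. -/
def xcapG {d : ℕ} {T : Type*} [Fintype T] [DecidableEq T] (g : T → (Fin d → ℤ))
    (Γ : Set (PM (T → A))) : ℝ :=
  ⨅ ε : {e : ℝ // 0 < e},
    Filter.limsup
      (fun n : ℕ => Real.logb 2 ((blocksG g (ball Γ ε.1) n).card) / (n : ℝ) ^ d) Filter.atTop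

/-- Product measures whose averaged marginal lies in `Γ`. -/
def PbarG {d : ℕ} {T : Type*} [Fintype T] [DecidableEq T] (g : T → (Fin d → ℤ))
    (Γ : Set (PM (T → A))) (n : ℕ) : Set (PM ((Fin d → Fin n) → A)) :=
  {μ | IsProduct μ ∧ avgMarg μ g ∈ Γ}

/-- The internal independence entropy. -/
def hindG {d : ℕ} {T : Type*} [Fintype T] [DecidableEq T] (g : T → (Fin d → ℤ))
    (Γ : Set (PM (T → A))) : ℝ :=
  Filter.limsup
    (fun n : ℕ => sSup ((fun μ => entropy μ / (n : ℝ) ^ d) '' PbarG g Γ n)) Filter.atTop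

/-- The independence entropy. -/
def hindBarG {d : ℕ} {T : Type*} [Fintype T] [DecidableEq T] (g : T → (Fin d → ℤ))
    (Γ : Set (PM (T → A))) : ℝ :=
  ⨅ ε : {e : ℝ // 0 < e}, hindG g (ball Γ ε.1)

/-- The point `j·e_i ∈ ℤ^d`. -/
def axialPoint {d : ℕ} (k : ℕ) (i : Fin d) (j : Fin k) : Fin d → ℤ :=
  fun i' => if i' = i then (j : ℤ) else 0

/-- The set `S = ⋃_{i∈[d]} [k]·e_i ⊆ ℤ^d`. -/
def axialSet (d k : ℕ) : Finset (Fin d → ℤ) :=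
  Finset.univ.biUnion fun i : Fin d => Finset.univ.image (axialPoint k i)

lemma axialPoint_mem {d k : ℕ} (i : Fin d) (j : Fin k) : axialPoint k i j ∈ axialSet d k :=
  Finset.mem_biUnion.mpr ⟨i, Finset.mem_univ _, Finset.mem_image_of_mem _ (Finset.mem_univ _)⟩

/-- The inclusion of `S = ⋃_i [k]e_i` into `ℤ^d`. -/
def valS (d k : ℕ) : {v // v ∈ axialSet d k} → (Fin d → ℤ) := Subtype.val

/-- Identification of `Σ^{[k]e_i}` with `Σ^{[k]}`: restriction of a configuration on `S`
to the `i`-th axis. -/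
def axialRestr {d k : ℕ} (i : Fin d) (x : {v // v ∈ axialSet d k} → A) : Fin k → A :=
  fun j => x ⟨axialPoint k i j, axialPoint_mem i j⟩

/-- The `d`-axial product of a one-dimensional SCS, as a set of measures on `Σ^S`. -/
def axialProdS {k : ℕ} (d : ℕ) (Γ : Set (PM (Fin k → A))) :
    Set (PM ({v // v ∈ axialSet d k} → A)) :=
  {μ | ∀ i : Fin d, push (axialRestr i) μ ∈ Γ}

/-- The embedding `[k] → ℤ^1`. -/
def oneG (k : ℕ) : Fin k → (Fin 1 → ℤ) := fun j _ => (j : ℤ)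

/-- The embedding `F_k^d → ℤ^d`. -/
def cubeG (d k : ℕ) : (Fin d → Fin k) → (Fin d → ℤ) := fun u i => (u i : ℤ)

/-- Identification of `Σ^{[k]e_i}` with `Σ^{[k]}` inside `Σ^{F_k^d}`. -/
def cubeRestr {d k : ℕ} (i : Fin d) (x : (Fin d → Fin k) → A) : Fin k → A :=
  fun j => x fun i' => if i' = i then j else ⟨0, j.pos⟩

/-- The `d`-axial product of a one-dimensional SCS, viewed inside `P(Σ^{F_k^d})`. -/
def axialProdC {k : ℕ} (d : ℕ) (Γ : Set (PM (Fin k → A))) :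
    Set (PM ((Fin d → Fin k) → A)) :=
  {μ | ∀ i : Fin d, push (cubeRestr i) μ ∈ Γ}

/-- The weak `d`-axial product of a one-dimensional SCS, viewed inside `P(Σ^{F_k^d})`. -/
def weakAxialC {k : ℕ} (d : ℕ) (Γ : Set (PM (Fin k → A))) :
    Set (PM ((Fin d → Fin k) → A)) :=
  {μ | avgPM _ (fun i : Fin d => push (cubeRestr i) μ) ∈ Γ}

/-- `P̃_n(Γ^⊠d)`: product measures whose direction-averaged `[k]`-marginal lies in `Γ`. -/
def PtildeG {k : ℕ} (d : ℕ) (Γ : Set (PM (Fin k → A))) (n : ℕ) :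
    Set (PM ((Fin d → Fin n) → A)) :=
  {μ | IsProduct μ ∧ avgPM _ (fun i : Fin d => avgMarg μ (axialPoint k i)) ∈ Γ}

/-- `h̃_ind(Γ^⊠d)`, the relaxed independence entropy of the weak axial product. -/
def htildeG {k : ℕ} (d : ℕ) (Γ : Set (PM (Fin k → A))) : ℝ :=
  ⨅ ε : {e : ℝ // 0 < e},
    Filter.limsup
      (fun n : ℕ => sSup ((fun μ => entropy μ / (n : ℝ) ^ d) '' PtildeG d (ball Γ ε.1) n))
      Filter.atTop

open Classical in
/-- `B_n(Γ^⊗d)`: the admissible blocks of the `d`-axial product. -/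
def axialBlocks {k : ℕ} (Γ : Set (PM (Fin k → A))) (d n : ℕ) :
    Finset ((Fin d → Fin n) → A) :=
  Finset.univ.filter fun w => ∀ i : Fin d, empAlong w (axialPoint k i) ∈ Γ

/-- `μ_{y,A}`: the uniform measure on the admissible blocks agreeing with `y` on `A'`. -/
def muYA {k : ℕ} (Γ : Set (PM (Fin k → A))) (d n : ℕ) (A' : Finset (Fin d → Fin n))
    (y : (Fin d → Fin n) → A) : PM ((Fin d → Fin n) → A) :=
  uniformOn ((axialBlocks Γ d n).filter fun x => ∀ v ∈ A', x v = y v)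

/-- `η_{y,A}`: the product of the single-site marginals of `μ_{y,A}`. -/
def etaYA {k : ℕ} (Γ : Set (PM (Fin k → A))) (d n : ℕ) (A' : Finset (Fin d → Fin n))
    (y : (Fin d → Fin n) → A) : PM ((Fin d → Fin n) → A) :=
  prodPM fun v => site (muYA Γ d n A' y) v

open Classical in
/-- The probability of an event. -/
def probOf (P : PM X) (E : Set X) : ℝ := ∑ x, if x ∈ E then P.1 x else 0

/-- Expectation of a real function. -/
def expect (P : PM X) (F : X → ℝ) : ℝ := ∑ x, P.1 x * F x

open Classical in
/-- Conditional measure given an event (junk value `P` itself for null events). -/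
def condPM (P : PM X) (E : Set X) : PM X :=
  if h : 0 < probOf P E then
    ⟨fun x => (if x ∈ E then P.1 x else 0) / probOf P E,
      fun x => div_nonneg (by by_cases hx : x ∈ E <;> simp [hx] <;> exact P.2.1 x) (le_of_lt h),
      by rw [← Finset.sum_div]; rw [show (∑ x, if x ∈ E then P.1 x else 0) = probOf P E from rfl];
         exact div_self (ne_of_gt h)⟩
  else P

/-- `[−j]e_i + v = {v − e_i, …, v − j·e_i}` (coordinates mod `n`). -/
def segNeg {d n : ℕ} (i : Fin d) (v : Fin d → Fin n) (j : ℕ) : Finset (Fin d → Fin n) :=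
  (Finset.range j).image fun l : ℕ => cycAdd v fun i' => if i' = i then -((l : ℤ) + 1) else 0


section AuxBasic

variable {X Y : Type*} [Fintype X] [Fintype Y]

lemma tv_eq_half (μ ν : PM X) : tv μ ν = (∑ x, |μ.1 x - ν.1 x|) / 2 := by
  classical
  set g : X → ℝ := fun x => μ.1 x - ν.1 x with hg
  have hsum : ∑ x, g x = 0 := by
    simp only [hg, Finset.sum_sub_distrib, μ.2.2, ν.2.2, sub_self]
  set W₀ : Finset X := Finset.univ.filter (fun x => 0 ≤ g x) with hW₀
  have hsub : ∀ W : Finset X, ∑ x ∈ W, g x ≤ ∑ x ∈ W₀, g x := by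
    intro W
    calc ∑ x ∈ W, g x ≤ ∑ x ∈ W.filter (fun x => 0 ≤ g x), g x := by
          rw [Finset.sum_filter]
          apply Finset.sum_le_sum
          intro x _
          by_cases h : 0 ≤ g x
          · simp [h]
          · simp only [h, if_false]; linarith [le_of_not_ge h]
      _ ≤ ∑ x ∈ W₀, g x := by
          apply Finset.sum_le_sum_of_subset_of_nonneg
          · intro x hx
            simp only [hW₀, Finset.mem_filter, Finset.mem_univ, true_and]
            exact (Finset.mem_filter.mp hx).2
          · intro x hx _
            exact (Finset.mem_filter.mp hx).2
  have key : ∑ x ∈ W₀, g x = (∑ x, |g x|) / 2 := by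
    have e1 : ∑ x ∈ W₀, |g x| = ∑ x ∈ W₀, g x :=
      Finset.sum_congr rfl fun x hx => abs_of_nonneg (Finset.mem_filter.mp hx).2
    have e2 : ∑ x ∈ W₀ᶜ, |g x| = -∑ x ∈ W₀ᶜ, g x := by
      rw [← Finset.sum_neg_distrib]
      refine Finset.sum_congr rfl fun x hx => ?_
      have : ¬ (0 ≤ g x) := by
        intro h
        exact (Finset.mem_compl.mp hx) (by simp [hW₀, h])
      exact abs_of_neg (lt_of_not_ge this)
    have e3 : ∑ x ∈ W₀, |g x| + ∑ x ∈ W₀ᶜ, |g x| = ∑ x, |g x| :=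
      Finset.sum_add_sum_compl W₀ _
    have e4 : ∑ x ∈ W₀, g x + ∑ x ∈ W₀ᶜ, g x = ∑ x, g x :=
      Finset.sum_add_sum_compl W₀ _
    rw [hsum] at e4
    linarith
  have habs : ∀ W : Finset X, |∑ x ∈ W, g x| ≤ (∑ x, |g x|) / 2 := by
    intro W
    rw [abs_le]
    constructor
    · have h1 := hsub Wᶜ
      have e4 : ∑ x ∈ W, g x + ∑ x ∈ Wᶜ, g x = ∑ x, g x :=
        Finset.sum_add_sum_compl W _
      rw [hsum] at e4
      linarith [key]
    · linarith [hsub W, key]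
  unfold tv
  apply le_antisymm
  · apply ciSup_le
    intro W
    have : ∑ x ∈ W, μ.1 x - ∑ x ∈ W, ν.1 x = ∑ x ∈ W, g x := by
      rw [Finset.sum_sub_distrib]
    rw [this]
    exact habs W
  · have hb : BddAbove (Set.range fun W : Finset X => |∑ x ∈ W, μ.1 x - ∑ x ∈ W, ν.1 x|) :=
      Set.Finite.bddAbove (Set.finite_range _)
    have := le_ciSup hb W₀
    have e : ∑ x ∈ W₀, μ.1 x - ∑ x ∈ W₀, ν.1 x = ∑ x ∈ W₀, g x := by
      rw [Finset.sum_sub_distrib]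
    rw [e, key] at this
    exact le_trans (le_abs_self _) this

lemma tv_nonneg (μ ν : PM X) : 0 ≤ tv μ ν := by
  rw [tv_eq_half]; positivity

lemma push_val [DecidableEq Y] (f : X → Y) (μ : PM X) (y : Y) :
    (push f μ).1 y = ∑ x, if f x = y then μ.1 x else 0 := by
  rw [show (push f μ).1 y = ∑ x ∈ Finset.univ.filter fun x => f x = y, μ.1 x from rfl,
    Finset.sum_filter]

lemma push_push {Z : Type*} [Fintype Z] [DecidableEq Y] [DecidableEq Z]
    (f : X → Y) (g : Y → Z) (μ : PM X) :
    push g (push f μ) = push (fun x => g (f x)) μ := by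
  apply Subtype.ext
  funext z
  rw [push_val, push_val]
  calc ∑ y, (if g y = z then (push f μ).1 y else 0)
      = ∑ y, ∑ x, if f x = y then (if g (f x) = z then μ.1 x else 0) else 0 := by
        refine Finset.sum_congr rfl fun y _ => ?_
        by_cases h : g y = z
        · rw [if_pos h, push_val]
          refine Finset.sum_congr rfl fun x _ => ?_
          by_cases hf : f x = y
          · rw [if_pos hf, if_pos hf, if_pos (by rw [hf]; exact h)]
          · rw [if_neg hf, if_neg hf]
        · rw [if_neg h]
          symm
          apply Finset.sum_eq_zero
          intro x _
          by_cases hf : f x = y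
          · rw [if_pos hf, if_neg (by rw [hf]; exact h)]
          · rw [if_neg hf]
    _ = ∑ x, ∑ y, if f x = y then (if g (f x) = z then μ.1 x else 0) else 0 :=
        Finset.sum_comm
    _ = ∑ x, if g (f x) = z then μ.1 x else 0 := by
        refine Finset.sum_congr rfl fun x _ => ?_
        rw [Finset.sum_ite_eq]
        simp

lemma tv_push_le [DecidableEq Y] (f : X → Y) (μ ν : PM X) :
    tv (push f μ) (push f ν) ≤ tv μ ν := by
  rw [tv_eq_half, tv_eq_half]
  have h : ∑ y, |(push f μ).1 y - (push f ν).1 y| ≤ ∑ x, |μ.1 x - ν.1 x| := by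
    calc ∑ y, |(push f μ).1 y - (push f ν).1 y|
        = ∑ y, |∑ x ∈ Finset.univ.filter (fun x => f x = y), (μ.1 x - ν.1 x)| := by
          refine Finset.sum_congr rfl fun y _ => ?_
          rw [Finset.sum_sub_distrib]
          rfl
      _ ≤ ∑ y, ∑ x ∈ Finset.univ.filter (fun x => f x = y), |μ.1 x - ν.1 x| :=
          Finset.sum_le_sum fun y _ => Finset.abs_sum_le_sum_abs _ _
      _ = ∑ x, |μ.1 x - ν.1 x| := Finset.sum_fiberwise _ _ _
  linarith

lemma expect_push [DecidableEq Y] (f : X → Y) (μ : PM X) (G : Y → ℝ) :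
    expect (push f μ) G = expect μ (fun x => G (f x)) := by
  unfold expect
  calc ∑ y, (push f μ).1 y * G y
      = ∑ y, ∑ x ∈ Finset.univ.filter (fun x => f x = y), μ.1 x * G (f x) := by
        refine Finset.sum_congr rfl fun y _ => ?_
        rw [show (push f μ).1 y = ∑ x ∈ Finset.univ.filter fun x => f x = y, μ.1 x from rfl,
          Finset.sum_mul]
        refine Finset.sum_congr rfl fun x hx => ?_
        rw [(Finset.mem_filter.mp hx).2]
    _ = ∑ x, μ.1 x * G (f x) := Finset.sum_fiberwise _ _ _

lemma expect_nonneg (μ : PM X) (F : X → ℝ) (h : ∀ x, 0 ≤ F x) : 0 ≤ expect μ F :=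
  Finset.sum_nonneg fun x _ => mul_nonneg (μ.2.1 x) (h x)

lemma expect_le_expect (μ : PM X) (F G : X → ℝ) (h : ∀ x, μ.1 x ≠ 0 → F x ≤ G x) :
    expect μ F ≤ expect μ G := by
  apply Finset.sum_le_sum
  intro x _
  by_cases hx : μ.1 x = 0
  · rw [hx]
    simp
  · exact mul_le_mul_of_nonneg_left (h x hx) (μ.2.1 x)

lemma expect_congr (μ : PM X) (F G : X → ℝ) (h : ∀ x, μ.1 x ≠ 0 → F x = G x) :
    expect μ F = expect μ G :=
  le_antisymm (expect_le_expect _ _ _ fun x hx => (h x hx).le)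
    (expect_le_expect _ _ _ fun x hx => (h x hx).ge)

lemma tv_triangle (μ ν ρ : PM X) : tv μ ρ ≤ tv μ ν + tv ν ρ := by
  rw [tv_eq_half, tv_eq_half, tv_eq_half]
  have h : ∑ x, |μ.1 x - ρ.1 x| ≤ ∑ x, |μ.1 x - ν.1 x| + ∑ x, |ν.1 x - ρ.1 x| := by
    rw [← Finset.sum_add_distrib]
    exact Finset.sum_le_sum fun x _ => abs_sub_le _ _ _
  linarith

lemma tv_eq_zero_of_unique [Unique X] (μ ν : PM X) : tv μ ν = 0 := by
  have hμ : μ.1 default = 1 := by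
    have h := μ.2.2
    rwa [Fintype.sum_unique] at h
  have hν : ν.1 default = 1 := by
    have h := ν.2.2
    rwa [Fintype.sum_unique] at h
  rw [tv_eq_half, Fintype.sum_unique, hμ, hν]
  norm_num

end AuxBasic

section AuxProd

variable {ι : Type*} [Fintype ι] [DecidableEq ι] {A : Type*} [Fintype A] [DecidableEq A]

lemma sum_update_indep (p : ι → PM A) (u₀ : ι) (a₀ : A) (C : (ι → A) → Prop)
    [DecidablePred C] (hC : ∀ z a, C (Function.update z u₀ a) ↔ C z) :
    ∑ z : ι → A, (if C z ∧ z u₀ = a₀ then ∏ u, (p u).1 (z u) else 0)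
      = (p u₀).1 a₀ * ∑ z : ι → A, (if C z then ∏ u, (p u).1 (z u) else 0) := by
  classical
  set R : (ι → A) → ℝ := fun z => ∏ u ∈ Finset.univ.erase u₀, (p u).1 (z u) with hRdef
  have hprod : ∀ z : ι → A, ∏ u, (p u).1 (z u) = (p u₀).1 (z u₀) * R z := fun z =>
    (Finset.mul_prod_erase _ _ (Finset.mem_univ u₀)).symm
  have hR : ∀ (z : ι → A) (a : A), R (Function.update z u₀ a) = R z := by
    intro z a
    refine Finset.prod_congr rfl fun u hu => ?_
    rw [Function.update_of_ne (Finset.ne_of_mem_erase hu)]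
  set T : A → ℝ := fun a => ∑ z : ι → A, (if C z ∧ z u₀ = a then R z else 0) with hTdef
  have hT : ∀ a, T a = T a₀ := by
    intro a
    rw [hTdef]
    dsimp only
    rw [← Finset.sum_filter, ← Finset.sum_filter]
    refine Finset.sum_nbij' (fun z => Function.update z u₀ a₀)
      (fun z => Function.update z u₀ a) ?_ ?_ ?_ ?_ ?_
    · intro z hz
      obtain ⟨hc, he⟩ := (Finset.mem_filter.mp hz).2
      refine Finset.mem_filter.mpr ⟨Finset.mem_univ _, (hC z a₀).mpr hc, ?_⟩
      exact Function.update_self _ _ _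
    · intro z hz
      obtain ⟨hc, he⟩ := (Finset.mem_filter.mp hz).2
      refine Finset.mem_filter.mpr ⟨Finset.mem_univ _, (hC z a).mpr hc, ?_⟩
      exact Function.update_self _ _ _
    · intro z hz
      obtain ⟨hc, he⟩ := (Finset.mem_filter.mp hz).2
      show Function.update (Function.update z u₀ a₀) u₀ a = z
      rw [Function.update_idem, ← he, Function.update_eq_self]
    · intro z hz
      obtain ⟨hc, he⟩ := (Finset.mem_filter.mp hz).2
      show Function.update (Function.update z u₀ a) u₀ a₀ = z
      rw [Function.update_idem, ← he, Function.update_eq_self]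
    · intro z hz
      exact (hR z a₀).symm
  have hLHS : ∑ z : ι → A, (if C z ∧ z u₀ = a₀ then ∏ u, (p u).1 (z u) else 0)
      = (p u₀).1 a₀ * T a₀ := by
    rw [hTdef]
    dsimp only
    rw [Finset.mul_sum]
    refine Finset.sum_congr rfl fun z _ => ?_
    by_cases h : C z ∧ z u₀ = a₀
    · rw [if_pos h, if_pos h, hprod z, h.2]
    · rw [if_neg h, if_neg h, mul_zero]
  have hRHS : ∑ z : ι → A, (if C z then ∏ u, (p u).1 (z u) else 0) = T a₀ := by
    have hpart : ∑ z : ι → A, (if C z then ∏ u, (p u).1 (z u) else 0)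
        = ∑ a : A, (p u₀).1 a * T a := by
      have : ∀ z : ι → A, (if C z then ∏ u, (p u).1 (z u) else 0)
          = ∑ a : A, (if C z ∧ z u₀ = a then (p u₀).1 a * R z else 0) := by
        intro z
        by_cases h : C z
        · simp only [h, true_and, if_true]
          rw [Finset.sum_ite_eq, if_pos (Finset.mem_univ _), ← hprod z]
        · simp [h]
      rw [Finset.sum_congr rfl fun z _ => this z, Finset.sum_comm]
      refine Finset.sum_congr rfl fun a _ => ?_
      rw [hTdef]
      dsimp only
      rw [Finset.mul_sum]
      refine Finset.sum_congr rfl fun z _ => ?_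
      by_cases h : C z ∧ z u₀ = a
      · rw [if_pos h, if_pos h]
      · rw [if_neg h, if_neg h, mul_zero]
    rw [hpart, Finset.sum_congr rfl fun a _ => by rw [hT a]]
    rw [← Finset.sum_mul, (p u₀).2.2, one_mul]
  rw [hLHS, hRHS]

lemma site_prodPM [Nonempty A] (p : ι → PM A) (u : ι) : site (prodPM p) u = p u := by
  classical
  apply Subtype.ext
  funext a
  show (push (fun w : ι → A => w u) (prodPM p)).1 a = (p u).1 a
  rw [push_val]
  have h := sum_update_indep p u a (fun _ => True) (fun z b => Iff.rfl)
  simp only [true_and, if_true] at h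
  have hs : ∑ z : ι → A, ∏ u', (p u').1 (z u') = 1 := (prodPM p).2.2
  rw [hs, mul_one] at h
  rw [← h]
  rfl

open Classical in
lemma prod_push_factor [Nonempty A] (p : ι → PM A) {m : ℕ} (t : Fin (m + 1) → ι)
    (hf : ∀ l : Fin m, t l.castSucc ≠ t (Fin.last m)) (w : Fin (m + 1) → A) :
    (push (fun z (l : Fin (m + 1)) => z (t l)) (prodPM p)).1 w
      = (push (fun z (l : Fin m) => z (t l.castSucc)) (prodPM p)).1 (Fin.init w)
        * (p (t (Fin.last m))).1 (w (Fin.last m)) := by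
  classical
  have hC : ∀ (z : ι → A) (a : A),
      (∀ l : Fin m, Function.update z (t (Fin.last m)) a (t l.castSucc) = w l.castSucc)
        ↔ (∀ l : Fin m, z (t l.castSucc) = w l.castSucc) := by
    intro z a
    constructor
    · intro h l
      have := h l
      rwa [Function.update_of_ne (hf l)] at this
    · intro h l
      rw [Function.update_of_ne (hf l)]
      exact h l
  have e1 : (push (fun z (l : Fin (m + 1)) => z (t l)) (prodPM p)).1 w
      = ∑ z : ι → A, if (∀ l : Fin m, z (t l.castSucc) = w l.castSucc)
          ∧ z (t (Fin.last m)) = w (Fin.last m) then ∏ u, (p u).1 (z u) else 0 := by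
    rw [push_val]
    refine Finset.sum_congr rfl fun z _ => if_congr ?_ rfl rfl
    rw [funext_iff, Fin.forall_fin_succ']
  have e2 : (push (fun z (l : Fin m) => z (t l.castSucc)) (prodPM p)).1 (Fin.init w)
      = ∑ z : ι → A, if (∀ l : Fin m, z (t l.castSucc) = w l.castSucc)
          then ∏ u, (p u).1 (z u) else 0 := by
    rw [push_val]
    refine Finset.sum_congr rfl fun z _ => if_congr ?_ rfl rfl
    rw [funext_iff]
    exact forall_congr' fun l => by rw [show Fin.init w l = w l.castSucc from rfl]
  rw [e1, e2, sum_update_indep p (t (Fin.last m)) (w (Fin.last m)) _ hC]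
  ring

/-- Product of two finite probability measures. -/
def pairPM {X Y : Type*} [Fintype X] [Fintype Y] (μ : PM X) (ν : PM Y) : PM (X × Y) :=
  ⟨fun xy => μ.1 xy.1 * ν.1 xy.2, fun xy => mul_nonneg (μ.2.1 _) (ν.2.1 _), by
    rw [Fintype.sum_prod_type]
    calc ∑ x, ∑ y, μ.1 x * ν.1 y = ∑ x, μ.1 x * ∑ y, ν.1 y :=
          Finset.sum_congr rfl fun x _ => (Finset.mul_sum _ _ _).symm
      _ = 1 := by rw [ν.2.2]; simp [μ.2.2]⟩

/-- The equivalence `(Fin m → A) × A ≃ (Fin (m+1) → A)` by `snoc`. -/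
def snocEquiv (m : ℕ) (A : Type*) : ((Fin m → A) × A) ≃ (Fin (m + 1) → A) where
  toFun za := Fin.snoc za.1 za.2
  invFun w := (Fin.init w, w (Fin.last m))
  left_inv za := by simp
  right_inv w := Fin.snoc_init_self w

lemma sum_snoc {m : ℕ} (F : (Fin (m + 1) → A) → ℝ) :
    ∑ w : Fin (m + 1) → A, F w = ∑ w' : Fin m → A, ∑ a : A, F (Fin.snoc w' a) := by
  rw [← (snocEquiv m A).sum_comp F, Fintype.sum_prod_type]
  rfl

lemma pairPM_snoc_val {m : ℕ} (Q : PM (Fin m → A)) (p : PM A) (w : Fin (m + 1) → A) :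
    (push (fun za : (Fin m → A) × A => Fin.snoc za.1 za.2) (pairPM Q p)).1 w
      = Q.1 (Fin.init w) * p.1 (w (Fin.last m)) := by
  classical
  rw [push_val]
  have hiff : ∀ za : (Fin m → A) × A,
      (Fin.snoc za.1 za.2 = w) ↔ (za = (Fin.init w, w (Fin.last m))) := by
    intro za
    constructor
    · intro h
      rw [← h]
      simp
    · intro h
      rw [h]
      exact Fin.snoc_init_self w
  calc ∑ za : (Fin m → A) × A, (if Fin.snoc za.1 za.2 = w then (pairPM Q p).1 za else 0)
      = ∑ za : (Fin m → A) × A,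
          (if za = (Fin.init w, w (Fin.last m)) then (pairPM Q p).1 za else 0) :=
        Finset.sum_congr rfl fun za _ => if_congr (hiff za) rfl rfl
    _ = (pairPM Q p).1 (Fin.init w, w (Fin.last m)) := by
        rw [Finset.sum_ite_eq']
        simp
    _ = _ := rfl

open Classical in
/-- One step of the chain rule, when the last site is fresh. -/
lemma fresh_step [Nonempty A] (ν : PM (ι → A)) {m : ℕ} (s : Fin (m + 1) → ι)
    (hfresh : ∀ l : Fin m, s l.castSucc ≠ s (Fin.last m)) :
    tv (push (fun z (l : Fin (m + 1)) => z (s l)) (prodPM fun u => site ν u))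
      (push (fun z (l : Fin (m + 1)) => z (s l)) ν)
    ≤ tv (push (fun z (l : Fin m) => z (s l.castSucc)) (prodPM fun u => site ν u))
        (push (fun z (l : Fin m) => z (s l.castSucc)) ν)
      + expect ν (fun z => tv (site ν (s (Fin.last m)))
          (site (condPM ν {z' | ∀ l' : Fin m, z' (s l'.castSucc) = z (s l'.castSucc)})
            (s (Fin.last m)))) := by
  classical
  set p : PM A := site ν (s (Fin.last m)) with hpd
  set Pm1 : PM (Fin (m + 1) → A) :=
    push (fun z (l : Fin (m + 1)) => z (s l)) (prodPM fun u => site ν u) with hPm1d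
  set Qm1 : PM (Fin (m + 1) → A) := push (fun z (l : Fin (m + 1)) => z (s l)) ν with hQm1d
  set Pm : PM (Fin m → A) :=
    push (fun z (l : Fin m) => z (s l.castSucc)) (prodPM fun u => site ν u) with hPmd
  set Qm : PM (Fin m → A) := push (fun z (l : Fin m) => z (s l.castSucc)) ν with hQmd
  set M : PM (Fin (m + 1) → A) :=
    push (fun za : (Fin m → A) × A => Fin.snoc za.1 za.2) (pairPM Qm p) with hMd
  -- value identities
  have hMval : ∀ w, M.1 w = Qm.1 (Fin.init w) * p.1 (w (Fin.last m)) := fun w =>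
    pairPM_snoc_val Qm p w
  have hPm1val : ∀ w, Pm1.1 w = Pm.1 (Fin.init w) * p.1 (w (Fin.last m)) := fun w =>
    prod_push_factor (fun u => site ν u) s hfresh w
  have hQmval : ∀ w' : Fin m → A,
      Qm.1 w' = ∑ z : ι → A, if (∀ l : Fin m, z (s l.castSucc) = w' l) then ν.1 z else 0 := by
    intro w'
    rw [hQmd, push_val]
    exact Finset.sum_congr rfl fun z _ => if_congr funext_iff rfl rfl
  have hfib : ∀ (w' : Fin m → A) (a : A) (z : ι → A),
      ((fun l : Fin (m + 1) => z (s l)) = Fin.snoc w' a)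
        ↔ ((∀ l : Fin m, z (s l.castSucc) = w' l) ∧ z (s (Fin.last m)) = a) := by
    intro w' a z
    rw [funext_iff, Fin.forall_fin_succ']
    constructor
    · rintro ⟨h1, h2⟩
      refine ⟨fun l => ?_, ?_⟩
      · have := h1 l
        rwa [Fin.snoc_castSucc] at this
      · rwa [Fin.snoc_last] at h2
    · rintro ⟨h1, h2⟩
      refine ⟨fun l => ?_, ?_⟩
      · rw [Fin.snoc_castSucc]
        exact h1 l
      · rw [Fin.snoc_last]
        exact h2
  have hQm1val : ∀ (w' : Fin m → A) (a : A),
      Qm1.1 (Fin.snoc w' a) = ∑ z : ι → A, if (∀ l : Fin m, z (s l.castSucc) = w' l)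
        ∧ z (s (Fin.last m)) = a then ν.1 z else 0 := by
    intro w' a
    rw [hQm1d, push_val]
    exact Finset.sum_congr rfl fun z _ => if_congr (hfib w' a z) rfl rfl
  have hprob : ∀ w' : Fin m → A,
      probOf ν {z' | ∀ l : Fin m, z' (s l.castSucc) = w' l} = Qm.1 w' := by
    intro w'
    rw [hQmval]
    unfold probOf
    refine Finset.sum_congr rfl fun z _ => ?_
    by_cases h : ∀ l : Fin m, z (s l.castSucc) = w' l
    · simp [h]
    · simp [h]
  have hQm1_zero : ∀ (w' : Fin m → A) (a : A), Qm.1 w' = 0 → Qm1.1 (Fin.snoc w' a) = 0 := by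
    intro w' a hw
    rw [hQmval] at hw
    have hz := (Finset.sum_eq_zero_iff_of_nonneg fun z _ => by
      by_cases h : (∀ l : Fin m, z (s l.castSucc) = w' l)
      · rw [if_pos h]; exact ν.2.1 z
      · rw [if_neg h]).mp hw
    rw [hQm1val]
    apply Finset.sum_eq_zero
    intro z _
    by_cases h : (∀ l : Fin m, z (s l.castSucc) = w' l) ∧ z (s (Fin.last m)) = a
    · rw [if_pos h]
      have := hz z (Finset.mem_univ z)
      rwa [if_pos h.1] at this
    · rw [if_neg h]
  have hsite : ∀ w' : Fin m → A, 0 < Qm.1 w' → ∀ a : A,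
      (site (condPM ν {z' | ∀ l' : Fin m, z' (s l'.castSucc) = w' l'}) (s (Fin.last m))).1 a
        = Qm1.1 (Fin.snoc w' a) / Qm.1 w' := by
    intro w' hw a
    show (push (fun z : ι → A => z (s (Fin.last m)))
        (condPM ν {z' | ∀ l' : Fin m, z' (s l'.castSucc) = w' l'})).1 a = _
    rw [push_val]
    rw [show condPM ν {z' | ∀ l' : Fin m, z' (s l'.castSucc) = w' l'} = _ from
      dif_pos (show 0 < probOf ν {z' | ∀ l' : Fin m, z' (s l'.castSucc) = w' l'} by rw [hprob]; exact hw)]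
    dsimp only
    rw [hprob w', hQm1val, Finset.sum_div]
    refine Finset.sum_congr rfl fun z _ => ?_
    by_cases h1 : z (s (Fin.last m)) = a
    · by_cases h2 : ∀ l : Fin m, z (s l.castSucc) = w' l
      · simp [h1, h2]
      · simp [h1, h2]
    · simp [h1]
  -- the conditional-term expectation, re-expressed as a sum over prefixes
  set G : (Fin m → A) → ℝ := fun w' => tv p
      (site (condPM ν {z' | ∀ l' : Fin m, z' (s l'.castSucc) = w' l'}) (s (Fin.last m)))
    with hGdef
  have hTlast : expect ν (fun z => tv (site ν (s (Fin.last m)))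
      (site (condPM ν {z' | ∀ l' : Fin m, z' (s l'.castSucc) = z (s l'.castSucc)})
        (s (Fin.last m)))) = ∑ w' : Fin m → A, Qm.1 w' * G w' := by
    have hp2 : expect Qm G = ∑ w' : Fin m → A, Qm.1 w' * G w' := rfl
    rw [← hp2, hQmd, expect_push]
  -- bound `tv M Qm1` by the conditional term
  have hα : tv M Qm1 ≤ ∑ w' : Fin m → A, Qm.1 w' * G w' := by
    rw [tv_eq_half, sum_snoc (fun w => |M.1 w - Qm1.1 w|), Finset.sum_div]
    apply Finset.sum_le_sum
    intro w' _
    by_cases hw : Qm.1 w' = 0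
    · have hz2 : (∑ a : A, |M.1 (Fin.snoc w' a) - Qm1.1 (Fin.snoc w' a)|) = 0 := by
        refine Finset.sum_eq_zero fun a _ => ?_
        rw [hMval, Fin.init_snoc, Fin.snoc_last, hw, zero_mul, hQm1_zero w' a hw, sub_zero,
          abs_zero]
      rw [hz2, zero_div, hw, zero_mul]
    · have hwpos : 0 < Qm.1 w' := lt_of_le_of_ne (Qm.2.1 w') (Ne.symm hw)
      have e2 : (∑ a : A, |M.1 (Fin.snoc w' a) - Qm1.1 (Fin.snoc w' a)|)
          = Qm.1 w' * ∑ a : A, |p.1 a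
              - (site (condPM ν {z' | ∀ l' : Fin m, z' (s l'.castSucc) = w' l'})
                  (s (Fin.last m))).1 a| := by
        rw [Finset.mul_sum]
        refine Finset.sum_congr rfl fun a _ => ?_
        rw [hMval, Fin.init_snoc, Fin.snoc_last, hsite w' hwpos a]
        rw [show Qm.1 w' * p.1 a - Qm1.1 (Fin.snoc w' a)
            = Qm.1 w' * (p.1 a - Qm1.1 (Fin.snoc w' a) / Qm.1 w') from by
          rw [mul_sub, mul_div_cancel₀ _ (ne_of_gt hwpos)]]
        rw [abs_mul, abs_of_pos hwpos]
      rw [e2, mul_div_assoc, hGdef]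
      dsimp only
      rw [tv_eq_half]
  -- the product-measure factorisation step
  have hβ : tv Pm1 M = tv Pm Qm := by
    rw [tv_eq_half, tv_eq_half]
    congr 1
    rw [sum_snoc (fun w => |Pm1.1 w - M.1 w|)]
    calc ∑ w' : Fin m → A, ∑ a : A, |Pm1.1 (Fin.snoc w' a) - M.1 (Fin.snoc w' a)|
        = ∑ w' : Fin m → A, ∑ a : A, |Pm.1 w' - Qm.1 w'| * p.1 a := by
          refine Finset.sum_congr rfl fun w' _ => Finset.sum_congr rfl fun a _ => ?_
          rw [hMval, hPm1val, Fin.init_snoc, Fin.snoc_last, ← sub_mul, abs_mul,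
            abs_of_nonneg (p.2.1 a)]
      _ = ∑ w' : Fin m → A, |Pm.1 w' - Qm.1 w'| := by
          refine Finset.sum_congr rfl fun w' _ => ?_
          rw [← Finset.mul_sum, p.2.2, mul_one]
  calc tv Pm1 Qm1 ≤ tv Pm1 M + tv M Qm1 := tv_triangle _ _ _
    _ ≤ tv Pm Qm + ∑ w' : Fin m → A, Qm.1 w' * G w' := add_le_add (le_of_eq hβ) hα
    _ = tv Pm Qm + expect ν (fun z => tv (site ν (s (Fin.last m)))
        (site (condPM ν {z' | ∀ l' : Fin m, z' (s l'.castSucc) = z (s l'.castSucc)})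
          (s (Fin.last m)))) := by rw [hTlast]

open Classical in
/-- The chain-rule (hybridisation) bound for total variation between the product of the
single-site marginals and the measure itself, along an arbitrary finite list of sites. -/
lemma chain_tv [Nonempty A] (ν : PM (ι → A)) :
    ∀ (m : ℕ) (s : Fin m → ι),
    tv (push (fun z (l : Fin m) => z (s l)) (prodPM fun u => site ν u))
      (push (fun z (l : Fin m) => z (s l)) ν)
    ≤ ∑ j : Fin m, expect ν fun z => tv (site ν (s j))
        (site (condPM ν {z' | ∀ l : Fin m, (l : ℕ) < (j : ℕ) → z' (s l) = z (s l)}) (s j)) := by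
  intro m
  induction m with
  | zero =>
      intro s
      rw [show (Finset.univ : Finset (Fin 0)) = ∅ from rfl, Finset.sum_empty]
      exact le_of_eq (tv_eq_zero_of_unique _ _)
  | succ m ih =>
      intro s
      set T : Fin (m + 1) → ℝ := fun j => expect ν fun z => tv (site ν (s j))
        (site (condPM ν {z' | ∀ l : Fin (m + 1), (l : ℕ) < (j : ℕ) → z' (s l) = z (s l)})
          (s j)) with hTdef
      have hterm : ∀ j : Fin m, T j.castSucc
          = expect ν fun z => tv (site ν (s j.castSucc))
              (site (condPM ν {z' | ∀ l : Fin m, (l : ℕ) < (j : ℕ)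
                → z' (s l.castSucc) = z (s l.castSucc)}) (s j.castSucc)) := by
        intro j
        rw [hTdef]
        dsimp only
        unfold expect
        refine Finset.sum_congr rfl fun z _ => ?_
        have hE : {z' : ι → A | ∀ l : Fin (m + 1), (l : ℕ) < ((j.castSucc : Fin (m + 1)) : ℕ)
              → z' (s l) = z (s l)}
            = {z' | ∀ l : Fin m, (l : ℕ) < (j : ℕ) → z' (s l.castSucc) = z (s l.castSucc)} := by
          ext z'
          simp only [Set.mem_setOf_eq, Fin.coe_castSucc]
          constructor
          · intro h l hl
            exact h l.castSucc (by simpa using hl)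
          · intro h l hl
            have hlm : (l : ℕ) < m := hl.trans j.2
            have hcast : l = (⟨(l : ℕ), hlm⟩ : Fin m).castSucc := by
              apply Fin.ext
              rfl
            rw [hcast]
            exact h ⟨(l : ℕ), hlm⟩ (by simpa using hl)
        dsimp only
        rw [hE]
      have hlast_nonneg : 0 ≤ T (Fin.last m) := by
        rw [hTdef]
        exact expect_nonneg _ _ fun z => tv_nonneg _ _
      by_cases hrep : ∃ l₀ : Fin m, s l₀.castSucc = s (Fin.last m)
      · -- repeated site: the last coordinate is a function of the earlier ones
        obtain ⟨l₀, hl₀⟩ := hrep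
        have hcomp : ∀ μ' : PM (ι → A),
            push (fun w : Fin m → A => (Fin.snoc w (w l₀) : Fin (m + 1) → A))
              (push (fun z (l : Fin m) => z (s l.castSucc)) μ')
            = push (fun z (l : Fin (m + 1)) => z (s l)) μ' := by
          intro μ'
          rw [push_push]
          congr 1
          funext z
          funext l
          induction l using Fin.lastCases with
          | last =>
              simp only [Fin.snoc_last]
              exact congrArg z hl₀
          | cast l' => simp only [Fin.snoc_castSucc]
        have h1 : tv (push (fun z (l : Fin (m + 1)) => z (s l)) (prodPM fun u => site ν u))
            (push (fun z (l : Fin (m + 1)) => z (s l)) ν)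
            ≤ tv (push (fun z (l : Fin m) => z (s l.castSucc)) (prodPM fun u => site ν u))
              (push (fun z (l : Fin m) => z (s l.castSucc)) ν) := by
          rw [← hcomp, ← hcomp]
          exact tv_push_le _ _ _
        calc tv (push (fun z (l : Fin (m + 1)) => z (s l)) (prodPM fun u => site ν u))
              (push (fun z (l : Fin (m + 1)) => z (s l)) ν)
            ≤ tv (push (fun z (l : Fin m) => z (s l.castSucc)) (prodPM fun u => site ν u))
              (push (fun z (l : Fin m) => z (s l.castSucc)) ν) := h1
          _ ≤ ∑ j : Fin m, expect ν (fun z => tv (site ν (s j.castSucc))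
                (site (condPM ν {z' | ∀ l : Fin m, (l : ℕ) < (j : ℕ)
                  → z' (s l.castSucc) = z (s l.castSucc)}) (s j.castSucc))) :=
              ih fun l => s l.castSucc
          _ = ∑ j : Fin m, T j.castSucc := Finset.sum_congr rfl fun j _ => (hterm j).symm
          _ ≤ (∑ j : Fin m, T j.castSucc) + T (Fin.last m) :=
              le_add_of_nonneg_right hlast_nonneg
          _ = ∑ j : Fin (m + 1), T j := (Fin.sum_univ_castSucc T).symm
      · -- fresh site
        push_neg at hrep
        have hEz : ∀ z : ι → A,
            {z' : ι → A | ∀ l : Fin (m + 1), (l : ℕ) < ((Fin.last m : Fin (m + 1)) : ℕ)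
              → z' (s l) = z (s l)}
            = {z' | ∀ l' : Fin m, z' (s l'.castSucc) = z (s l'.castSucc)} := by
          intro z
          ext z'
          simp only [Set.mem_setOf_eq, Fin.val_last]
          constructor
          · intro h l'
            exact h l'.castSucc (by simpa using l'.2)
          · intro h l hl
            have hcast : l = (⟨(l : ℕ), hl⟩ : Fin m).castSucc := by
              apply Fin.ext
              rfl
            rw [hcast]
            exact h ⟨(l : ℕ), hl⟩
        have hconv : expect ν (fun z => tv (site ν (s (Fin.last m)))
            (site (condPM ν {z' | ∀ l' : Fin m, z' (s l'.castSucc) = z (s l'.castSucc)})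
              (s (Fin.last m)))) = T (Fin.last m) := by
          rw [hTdef]
          dsimp only
          unfold expect
          refine Finset.sum_congr rfl fun z _ => ?_
          dsimp only
          rw [hEz z]
        calc tv (push (fun z (l : Fin (m + 1)) => z (s l)) (prodPM fun u => site ν u))
              (push (fun z (l : Fin (m + 1)) => z (s l)) ν)
            ≤ tv (push (fun z (l : Fin m) => z (s l.castSucc)) (prodPM fun u => site ν u))
                (push (fun z (l : Fin m) => z (s l.castSucc)) ν)
              + expect ν (fun z => tv (site ν (s (Fin.last m)))
                  (site (condPM ν {z' | ∀ l' : Fin m, z' (s l'.castSucc) = z (s l'.castSucc)})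
                    (s (Fin.last m)))) := fresh_step ν s hrep
          _ = tv (push (fun z (l : Fin m) => z (s l.castSucc)) (prodPM fun u => site ν u))
                (push (fun z (l : Fin m) => z (s l.castSucc)) ν) + T (Fin.last m) := by
              rw [hconv]
          _ ≤ (∑ j : Fin m, expect ν (fun z => tv (site ν (s j.castSucc))
                (site (condPM ν {z' | ∀ l : Fin m, (l : ℕ) < (j : ℕ)
                  → z' (s l.castSucc) = z (s l.castSucc)}) (s j.castSucc))))
              + T (Fin.last m) := add_le_add_left (ih fun l => s l.castSucc) _
          _ = (∑ j : Fin m, T j.castSucc) + T (Fin.last m) :=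
              congrArg (fun x => x + T (Fin.last m))
                (Finset.sum_congr rfl fun j _ => (hterm j).symm)
          _ = ∑ j : Fin (m + 1), T j := (Fin.sum_univ_castSucc T).symm

end AuxProd

section AuxMisc

lemma expect_sum_comm {X : Type*} [Fintype X] {J : Type*} [Fintype J] (μ : PM X)
    (g : J → X → ℝ) :
    expect μ (fun x => ∑ j, g j x) = ∑ j, expect μ (fun x => g j x) := by
  unfold expect
  calc ∑ x, μ.1 x * ∑ j, g j x = ∑ x, ∑ j, μ.1 x * g j x :=
        Finset.sum_congr rfl fun x _ => Finset.mul_sum _ _ _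
    _ = ∑ j, ∑ x, μ.1 x * g j x := Finset.sum_comm

open Classical in
lemma condPM_uniformOn' {X : Type*} [Fintype X] [Nonempty X] (C F : Finset X) (E : Set X)
    (hF : ∀ x, x ∈ F ↔ x ∈ C ∧ x ∈ E) (hne : F.Nonempty) :
    condPM (uniformOn C) E = uniformOn F := by
  classical
  have hC : C.Nonempty := by
    obtain ⟨x, hx⟩ := hne
    exact ⟨x, ((hF x).mp hx).1⟩
  have hCc : (0 : ℝ) < C.card := by exact_mod_cast Finset.card_pos.mpr hC
  have hFc : (0 : ℝ) < F.card := by exact_mod_cast Finset.card_pos.mpr hne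
  have hC0 : (C.card : ℝ) ≠ 0 := ne_of_gt hCc
  have hF0 : (F.card : ℝ) ≠ 0 := ne_of_gt hFc
  have hval : ∀ x, (uniformOn C).1 x = if x ∈ C then (C.card : ℝ)⁻¹ else 0 := by
    intro x
    rw [show uniformOn C = _ from dif_pos hC]
  have hprob : probOf (uniformOn C) E = (F.card : ℝ) / C.card := by
    unfold probOf
    calc ∑ x, (if x ∈ E then (uniformOn C).1 x else 0)
        = ∑ x, (if x ∈ F then (C.card : ℝ)⁻¹ else 0) := by
          refine Finset.sum_congr rfl fun x _ => ?_
          rw [hval]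
          by_cases h1 : x ∈ E <;> by_cases h2 : x ∈ C <;>
            simp [h1, h2, hF x]
      _ = (F.card : ℝ) * (C.card : ℝ)⁻¹ := by
          rw [Finset.sum_ite_mem, Finset.univ_inter, Finset.sum_const, nsmul_eq_mul]
      _ = _ := by rw [div_eq_mul_inv]
  have hppos : 0 < probOf (uniformOn C) E := by
    rw [hprob]
    exact div_pos hFc hCc
  apply Subtype.ext
  funext x
  rw [show condPM (uniformOn C) E = _ from dif_pos hppos]
  dsimp only
  rw [hprob, hval]
  rw [show uniformOn F = _ from dif_pos hne]
  dsimp only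
  by_cases h1 : x ∈ E <;> by_cases h2 : x ∈ C
  · have h3 : x ∈ F := (hF x).mpr ⟨h2, h1⟩
    simp only [h1, h2, h3, if_true]
    field_simp
  · have h3 : x ∉ F := fun h => h2 ((hF x).mp h).1
    simp [h1, h2, h3]
  · have h3 : x ∉ F := fun h => h1 ((hF x).mp h).2
    simp [h1, h3]
  · have h3 : x ∉ F := fun h => h1 ((hF x).mp h).2
    simp [h1, h3]

open Classical in
lemma expect_cells {X : Type*} [Fintype X] [Nonempty X] (B : Finset X) (hB : B.Nonempty)
    (r : X → X → Prop) (cell : X → Finset X)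
    (hmem : ∀ y x, x ∈ cell y ↔ x ∈ B ∧ r x y)
    (hrefl : ∀ x, r x x) (hsymm : ∀ x y, r x y → r y x)
    (hcellEq : ∀ y z, r z y → cell z = cell y)
    (G : X → ℝ) :
    expect (uniformOn B) (fun y => expect (uniformOn (cell y)) G)
      = expect (uniformOn B) G := by
  classical
  have hval : ∀ (s : Finset X), s.Nonempty → ∀ x,
      (uniformOn s).1 x = if x ∈ s then (s.card : ℝ)⁻¹ else 0 := by
    intro s hs x
    rw [show uniformOn s = _ from dif_pos hs]
  unfold expect
  have key : ∀ y, (uniformOn B).1 y * (∑ z, (uniformOn (cell y)).1 z * G z)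
      = ∑ z, (if y ∈ B ∧ z ∈ cell y then
          (B.card : ℝ)⁻¹ * ((cell y).card : ℝ)⁻¹ * G z else 0) := by
    intro y
    rw [hval B hB y]
    by_cases hy : y ∈ B
    · rw [if_pos hy, Finset.mul_sum]
      refine Finset.sum_congr rfl fun z _ => ?_
      have hcy : (cell y).Nonempty := ⟨y, (hmem y y).mpr ⟨hy, hrefl y⟩⟩
      rw [hval _ hcy z]
      by_cases hz : z ∈ cell y
      · rw [if_pos hz, if_pos ⟨hy, hz⟩]
        ring
      · rw [if_neg hz, if_neg (fun h => hz h.2)]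
        ring
    · rw [if_neg hy, zero_mul]
      symm
      apply Finset.sum_eq_zero
      intro z _
      rw [if_neg (fun h => hy h.1)]
  rw [Finset.sum_congr rfl fun y _ => key y, Finset.sum_comm]
  refine Finset.sum_congr rfl fun z _ => ?_
  rw [hval B hB z]
  by_cases hz : z ∈ B
  · have hzz : z ∈ cell z := (hmem z z).mpr ⟨hz, hrefl z⟩
    have hcz : (cell z).Nonempty := ⟨z, hzz⟩
    have hcpos : (0 : ℝ) < (cell z).card := by exact_mod_cast Finset.card_pos.mpr hcz
    have hBpos : (0 : ℝ) < B.card := by exact_mod_cast Finset.card_pos.mpr hB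
    calc ∑ y, (if y ∈ B ∧ z ∈ cell y
            then (B.card : ℝ)⁻¹ * ((cell y).card : ℝ)⁻¹ * G z else 0)
        = ∑ y, (if y ∈ cell z
            then (B.card : ℝ)⁻¹ * ((cell z).card : ℝ)⁻¹ * G z else 0) := by
          refine Finset.sum_congr rfl fun y _ => ?_
          by_cases hy : y ∈ cell z
          · obtain ⟨hyB, hry⟩ := (hmem z y).mp hy
            have hrzy : r z y := hsymm y z hry
            rw [if_pos ⟨hyB, (hmem y z).mpr ⟨hz, hrzy⟩⟩, if_pos hy, hcellEq y z hrzy]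
          · rw [if_neg ?_, if_neg hy]
            rintro ⟨hyB, hzy⟩
            exact hy ((hmem z y).mpr ⟨hyB, hsymm z y ((hmem y z).mp hzy).2⟩)
      _ = ((cell z).card : ℝ)
            * ((B.card : ℝ)⁻¹ * ((cell z).card : ℝ)⁻¹ * G z) := by
          rw [Finset.sum_ite_mem, Finset.univ_inter, Finset.sum_const, nsmul_eq_mul]
      _ = (if z ∈ B then (B.card : ℝ)⁻¹ else 0) * G z := by
          rw [if_pos hz]
          field_simp
  · rw [if_neg hz, zero_mul]
    apply Finset.sum_eq_zero
    intro y _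
    rw [if_neg]
    rintro ⟨hyB, hzy⟩
    exact hz ((hmem y z).mp hzy).1

lemma cycAdd_val {d n : ℕ} (v : Fin d → Fin n) (u : Fin d → ℤ) (i : Fin d) :
    (((cycAdd v u) i : ℕ) : ℤ) = ((v i : ℤ) + u i) % (n : ℤ) := by
  have h0 : 0 < n := (v i).pos
  exact Int.toNat_of_nonneg (Int.emod_nonneg _ (by exact_mod_cast h0.ne'))

lemma cycAdd_cycAdd {d n : ℕ} (v : Fin d → Fin n) (u w : Fin d → ℤ) :
    cycAdd (cycAdd v u) w = cycAdd v (u + w) := by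
  funext i
  apply Fin.ext
  have h1 : (((cycAdd (cycAdd v u) w) i : ℕ) : ℤ) = (((cycAdd v (u + w)) i : ℕ) : ℤ) := by
    rw [cycAdd_val, cycAdd_val, cycAdd_val, Int.emod_add_emod, Pi.add_apply, add_assoc]
  exact_mod_cast h1

lemma cycAdd_zero {d n : ℕ} (v : Fin d → Fin n) : cycAdd v 0 = v := by
  funext i
  apply Fin.ext
  have h1 : (((cycAdd v 0) i : ℕ) : ℤ) = ((v i : ℕ) : ℤ) := by
    rw [cycAdd_val, Pi.zero_apply, add_zero]
    exact Int.emod_eq_of_lt (by positivity) (by exact_mod_cast (v i).2)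
  exact_mod_cast h1

/-- The cyclic shift as an equivalence. -/
def cycShift {d n : ℕ} (u : Fin d → ℤ) : (Fin d → Fin n) ≃ (Fin d → Fin n) where
  toFun v := cycAdd v u
  invFun v := cycAdd v (-u)
  left_inv v := by
    show cycAdd (cycAdd v u) (-u) = v
    rw [cycAdd_cycAdd, add_neg_cancel, cycAdd_zero]
  right_inv v := by
    show cycAdd (cycAdd v (-u)) u = v
    rw [cycAdd_cycAdd, neg_add_cancel, cycAdd_zero]

lemma sum_cycShift {d n : ℕ} (u : Fin d → ℤ) (F : (Fin d → Fin n) → ℝ) :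
    ∑ v : Fin d → Fin n, F (cycAdd v u) = ∑ v : Fin d → Fin n, F v :=
  Equiv.sum_comp (cycShift u) F

lemma axialPoint_add_neg {d k : ℕ} (i : Fin d) (j : Fin k) (t : ℕ) (l : Fin k)
    (hl : (l : ℤ) = (j : ℤ) - (t : ℤ) - 1) :
    (axialPoint k i j + fun i' => if i' = i then -((t : ℤ) + 1) else 0) = axialPoint k i l := by
  funext i'
  simp only [Pi.add_apply, axialPoint]
  by_cases hi : i' = i
  · simp only [hi, if_true, if_pos]
    omega
  · simp [hi]

lemma mem_segNeg_iff {d n k : ℕ} (i : Fin d) (v : Fin d → Fin n) (j : Fin k)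
    (w : Fin d → Fin n) :
    w ∈ segNeg i (cycAdd v (axialPoint k i j)) (j : ℕ)
      ↔ ∃ l : Fin k, (l : ℕ) < (j : ℕ) ∧ w = cycAdd v (axialPoint k i l) := by
  unfold segNeg
  rw [Finset.mem_image]
  constructor
  · rintro ⟨t, ht, rfl⟩
    rw [Finset.mem_range] at ht
    have hlk : (j : ℕ) - t - 1 < k := lt_of_le_of_lt (by omega) j.2
    refine ⟨⟨(j : ℕ) - t - 1, hlk⟩, ?_, ?_⟩
    · show (j : ℕ) - t - 1 < (j : ℕ)
      omega
    · rw [cycAdd_cycAdd, axialPoint_add_neg i j t ⟨(j : ℕ) - t - 1, hlk⟩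
        (by show ((((j : ℕ) - t - 1 : ℕ)) : ℤ) = ((j : ℕ) : ℤ) - (t : ℤ) - 1; omega)]
  · rintro ⟨l, hl, rfl⟩
    refine ⟨(j : ℕ) - (l : ℕ) - 1, Finset.mem_range.mpr (by omega), ?_⟩
    rw [cycAdd_cycAdd, axialPoint_add_neg i j _ l (by omega)]

end AuxMisc

/-- Reflection inequality for total-variation distances between the
independent version `η_{y,A}` and the conditional measure `μ_{y,A}`. -/
theorem sum_tv_marg_le {A : Type} [Fintype A] [DecidableEq A] [Nonempty A]
    (k : ℕ) (Γ : Set (PM (Fin k → A))) (d n : ℕ)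
    (hne : (axialBlocks Γ d n).Nonempty) (i : Fin d) (A' : Finset (Fin d → Fin n)) :
    ∑ v : Fin d → Fin n,
        expect (uniformOn (axialBlocks Γ d n)) (fun y =>
          tv (margAlong (etaYA Γ d n A' y) (axialPoint k i) v)
            (margAlong (muYA Γ d n A' y) (axialPoint k i) v)) ≤
      ∑ v : Fin d → Fin n, ∑ j : Fin k,
        expect (uniformOn (axialBlocks Γ d n)) (fun y =>
          tv (site (etaYA Γ d n A' y) v)
            (site (muYA Γ d n (A' ∪ segNeg i v (j : ℕ)) y) v)) := by
  classical
  rcases Nat.eq_zero_or_pos n with hn | hn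
  · subst hn
    haveI : IsEmpty (Fin d → Fin 0) := ⟨fun v => (v i).elim0⟩
    rw [Finset.univ_eq_empty, Finset.sum_empty, Finset.sum_empty]
  · haveI hNE : Nonempty (Fin d → Fin n) := ⟨fun _ => ⟨0, hn⟩⟩
    have hUmem : ∀ y : (Fin d → Fin n) → A,
        (uniformOn (axialBlocks Γ d n)).1 y ≠ 0 → y ∈ axialBlocks Γ d n := by
      intro y hy0
      by_contra hyB
      apply hy0
      show (uniformOn (axialBlocks Γ d n)).1 y = 0
      rw [show uniformOn (axialBlocks Γ d n) = _ from dif_pos hne]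
      simp [hyB]
    have hmu_eq : ∀ y z : (Fin d → Fin n) → A, z ∈ axialBlocks Γ d n →
        (∀ v' ∈ A', z v' = y v') → muYA Γ d n A' z = muYA Γ d n A' y := by
      intro y z hzB hzy
      unfold muYA
      congr 1
      ext x
      simp only [Finset.mem_filter, and_congr_right_iff]
      intro _
      constructor
      · intro h v' hv'
        rw [h v' hv']
        exact hzy v' hv'
      · intro h v' hv'
        rw [h v' hv']
        exact (hzy v' hv').symm
    have hpt : ∀ (v : Fin d → Fin n) (y : (Fin d → Fin n) → A), y ∈ axialBlocks Γ d n →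
        tv (margAlong (etaYA Γ d n A' y) (axialPoint k i) v)
          (margAlong (muYA Γ d n A' y) (axialPoint k i) v)
        ≤ ∑ j : Fin k, expect (muYA Γ d n A' y) (fun z =>
            tv (site (etaYA Γ d n A' z) (cycAdd v (axialPoint k i j)))
              (site (muYA Γ d n (A' ∪ segNeg i (cycAdd v (axialPoint k i j)) (j : ℕ)) z)
                (cycAdd v (axialPoint k i j)))) := by
      intro v y hy
      have hchain := chain_tv (muYA Γ d n A' y) k (fun l => cycAdd v (axialPoint k i l))
      refine le_trans (le_of_eq ?_) (le_trans hchain (le_of_eq ?_))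
      · rfl
      · refine Finset.sum_congr rfl fun j _ => ?_
        apply expect_congr
        intro z hz
        have hcy : ((axialBlocks Γ d n).filter fun x => ∀ v' ∈ A', x v' = y v').Nonempty :=
          ⟨y, Finset.mem_filter.mpr ⟨hy, fun _ _ => rfl⟩⟩
        have hzc : z ∈ (axialBlocks Γ d n).filter fun x => ∀ v' ∈ A', x v' = y v' := by
          by_contra hzc
          apply hz
          show (uniformOn _).1 z = 0
          rw [show uniformOn ((axialBlocks Γ d n).filter fun x => ∀ v' ∈ A', x v' = y v') = _ from dif_pos hcy]
          simp [hzc]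
        obtain ⟨hzB, hzy⟩ := Finset.mem_filter.mp hzc
        have hcond : condPM (muYA Γ d n A' y)
            {z' | ∀ l : Fin k, (l : ℕ) < (j : ℕ)
              → z' (cycAdd v (axialPoint k i l)) = z (cycAdd v (axialPoint k i l))}
            = muYA Γ d n (A' ∪ segNeg i (cycAdd v (axialPoint k i j)) (j : ℕ)) z := by
          show condPM (uniformOn _) _ = uniformOn _
          apply condPM_uniformOn'
          · intro x
            constructor
            · intro hx
              obtain ⟨hxB, hxz⟩ := Finset.mem_filter.mp hx
              refine ⟨Finset.mem_filter.mpr ⟨hxB, fun v' hv' => ?_⟩, ?_⟩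
              · rw [hxz v' (Finset.mem_union_left _ hv')]
                exact hzy v' hv'
              · intro l hl
                exact hxz _ (Finset.mem_union_right _
                  ((mem_segNeg_iff i v j _).mpr ⟨l, hl, rfl⟩))
            · rintro ⟨hx1, hx2⟩
              obtain ⟨hxB, hxy⟩ := Finset.mem_filter.mp hx1
              refine Finset.mem_filter.mpr ⟨hxB, fun w hw => ?_⟩
              rcases Finset.mem_union.mp hw with hw | hw
              · rw [hxy w hw]
                exact (hzy w hw).symm
              · obtain ⟨l, hl, rfl⟩ := (mem_segNeg_iff i v j w).mp hw
                exact hx2 l hl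
          · exact ⟨z, Finset.mem_filter.mpr ⟨hzB, fun l hl => rfl⟩⟩
        have hsites : site (etaYA Γ d n A' z) (cycAdd v (axialPoint k i j))
            = site (muYA Γ d n A' y) (cycAdd v (axialPoint k i j)) := by
          show site (prodPM fun w => site (muYA Γ d n A' z) w) _ = _
          rw [site_prodPM, hmu_eq y z hzB hzy]
        rw [hsites, ← hcond]
    have hexp : ∀ v : Fin d → Fin n,
        expect (uniformOn (axialBlocks Γ d n)) (fun y =>
          tv (margAlong (etaYA Γ d n A' y) (axialPoint k i) v)
            (margAlong (muYA Γ d n A' y) (axialPoint k i) v))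
        ≤ ∑ j : Fin k, expect (uniformOn (axialBlocks Γ d n)) (fun z =>
            tv (site (etaYA Γ d n A' z) (cycAdd v (axialPoint k i j)))
              (site (muYA Γ d n (A' ∪ segNeg i (cycAdd v (axialPoint k i j)) (j : ℕ)) z)
                (cycAdd v (axialPoint k i j)))) := by
      intro v
      calc expect (uniformOn (axialBlocks Γ d n)) (fun y =>
            tv (margAlong (etaYA Γ d n A' y) (axialPoint k i) v)
              (margAlong (muYA Γ d n A' y) (axialPoint k i) v))
          ≤ expect (uniformOn (axialBlocks Γ d n)) (fun y => ∑ j : Fin k,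
              expect (muYA Γ d n A' y) (fun z =>
                tv (site (etaYA Γ d n A' z) (cycAdd v (axialPoint k i j)))
                  (site (muYA Γ d n (A' ∪ segNeg i (cycAdd v (axialPoint k i j)) (j : ℕ)) z)
                    (cycAdd v (axialPoint k i j))))) :=
            expect_le_expect _ _ _ fun y hy => hpt v y (hUmem y hy)
        _ = ∑ j : Fin k, expect (uniformOn (axialBlocks Γ d n)) (fun y =>
              expect (muYA Γ d n A' y) (fun z =>
                tv (site (etaYA Γ d n A' z) (cycAdd v (axialPoint k i j)))
                  (site (muYA Γ d n (A' ∪ segNeg i (cycAdd v (axialPoint k i j)) (j : ℕ)) z)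
                    (cycAdd v (axialPoint k i j))))) := expect_sum_comm _ _
        _ = ∑ j : Fin k, expect (uniformOn (axialBlocks Γ d n)) (fun z =>
              tv (site (etaYA Γ d n A' z) (cycAdd v (axialPoint k i j)))
                (site (muYA Γ d n (A' ∪ segNeg i (cycAdd v (axialPoint k i j)) (j : ℕ)) z)
                  (cycAdd v (axialPoint k i j)))) := by
            refine Finset.sum_congr rfl fun j _ => ?_
            exact expect_cells (axialBlocks Γ d n) hne
              (fun x y => ∀ v' ∈ A', x v' = y v')
              (fun y => (axialBlocks Γ d n).filter fun x => ∀ v' ∈ A', x v' = y v')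
              (fun y x => Finset.mem_filter)
              (fun x _ _ => rfl)
              (fun x y h v' hv' => (h v' hv').symm)
              (fun y z hzy => by
                ext x
                simp only [Finset.mem_filter, and_congr_right_iff]
                intro _
                constructor
                · intro h v' hv'
                  rw [← hzy v' hv']
                  exact h v' hv'
                · intro h v' hv'
                  rw [hzy v' hv']
                  exact h v' hv')
              _
    calc ∑ v : Fin d → Fin n,
          expect (uniformOn (axialBlocks Γ d n)) (fun y =>
            tv (margAlong (etaYA Γ d n A' y) (axialPoint k i) v)
              (margAlong (muYA Γ d n A' y) (axialPoint k i) v))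
        ≤ ∑ v : Fin d → Fin n, ∑ j : Fin k,
            expect (uniformOn (axialBlocks Γ d n)) (fun z =>
              tv (site (etaYA Γ d n A' z) (cycAdd v (axialPoint k i j)))
                (site (muYA Γ d n (A' ∪ segNeg i (cycAdd v (axialPoint k i j)) (j : ℕ)) z)
                  (cycAdd v (axialPoint k i j)))) := Finset.sum_le_sum fun v _ => hexp v
      _ = ∑ j : Fin k, ∑ v : Fin d → Fin n,
            expect (uniformOn (axialBlocks Γ d n)) (fun z =>
              tv (site (etaYA Γ d n A' z) (cycAdd v (axialPoint k i j)))
                (site (muYA Γ d n (A' ∪ segNeg i (cycAdd v (axialPoint k i j)) (j : ℕ)) z)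
                  (cycAdd v (axialPoint k i j)))) := Finset.sum_comm
      _ = ∑ j : Fin k, ∑ v : Fin d → Fin n,
            expect (uniformOn (axialBlocks Γ d n)) (fun z =>
              tv (site (etaYA Γ d n A' z) v)
                (site (muYA Γ d n (A' ∪ segNeg i v (j : ℕ)) z) v)) :=
          Finset.sum_congr rfl fun j _ => sum_cycShift (axialPoint k i j)
            (fun w => expect (uniformOn (axialBlocks Γ d n)) (fun z =>
              tv (site (etaYA Γ d n A' z) w)
                (site (muYA Γ d n (A' ∪ segNeg i w (j : ℕ)) z) w)))
      _ = ∑ v : Fin d → Fin n, ∑ j : Fin k,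
            expect (uniformOn (axialBlocks Γ d n)) (fun y =>
              tv (site (etaYA Γ d n A' y) v)
                (site (muYA Γ d n (A' ∪ segNeg i v (j : ℕ)) y) v)) := Finset.sum_comm

end SCS
end
end

section
/- Let Σ be a finite nonempty alphabet, k ∈ ℕ, and let Γ ⊆ P(Σ^{[k]}) be a convex one-dimensional semiconstrained system. Let d, n ∈ ℕ with B_n(Γ^⊗d) nonempty. Then for every y ∈ B_n(Γ^⊗d), every A ⊆ F_n^d, and every i ∈ [d], the averaged marginal π̂_{[k]e_i}(μ_{y,A}) belongs to Γ; consequently, (1/d)·Σ_{i∈[d]} π̂_{[k]e_i}(μ_{y,A}) ∈ Γ. -/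
open scoped BigOperators
open Filter

noncomputable section

namespace SCS

variable {X Y : Type*} [Fintype X] [Fintype Y]

variable {A : Type*} [Fintype A] [DecidableEq A] [Nonempty A]

/-- A convex set of measures is closed under finite convex combinations. -/
lemma mem_convex_sum_aux {X : Type*} [Fintype X] (Γ : Set (PM X)) (hconv : IsConvexPM Γ)
    (N : ℕ) : ∀ {ι : Type} (s : Finset ι), s.card = N → s.Nonempty → ∀ (w : ι → ℝ),
    (∀ i ∈ s, 0 ≤ w i) → (∑ i ∈ s, w i) = 1 → ∀ (f : ι → PM X),
    (∀ i ∈ s, f i ∈ Γ) → ∀ (μ : PM X),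
    (∀ x, μ.1 x = ∑ i ∈ s, w i * (f i).1 x) → μ ∈ Γ := by
  classical
  induction N with
  | zero =>
    intro ι s hcard hs
    exact absurd (Finset.card_eq_zero.mp hcard) hs.ne_empty
  | succ N ih =>
    intro ι s hcard hs w hw hsum f hf μ hμ
    obtain ⟨a, ha⟩ := hs
    by_cases hN0 : N = 0
    · subst hN0
      obtain ⟨b, rfl⟩ := Finset.card_eq_one.mp hcard
      have hab : a = b := Finset.mem_singleton.mp ha
      subst hab
      have hwa : w a = 1 := by simpa using hsum
      have : μ = f a := by
        apply Subtype.ext; funext x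
        simp [hμ x, hwa]
      rw [this]; exact hf a ha
    · set t := s.erase a with ht
      have htcard : t.card = N := by rw [ht, Finset.card_erase_of_mem ha, hcard]; rfl
      have htne : t.Nonempty := Finset.card_pos.mp (by omega)
      have hsplit : ∀ (F : ι → ℝ), ∑ i ∈ s, F i = F a + ∑ i ∈ t, F i := by
        intro F; rw [ht, Finset.add_sum_erase s F ha]
      have hsum' : w a + ∑ i ∈ t, w i = 1 := by rw [← hsplit]; exact hsum
      have hwa0 : 0 ≤ w a := hw a ha
      have hwt : ∀ i ∈ t, 0 ≤ w i := fun i hi => hw i (Finset.mem_of_mem_erase hi)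
      by_cases hwa1 : w a = 1
      · have hz : ∑ i ∈ t, w i = 0 := by linarith
        have hz' : ∀ i ∈ t, w i = 0 :=
          (Finset.sum_eq_zero_iff_of_nonneg hwt).mp hz
        have : μ = f a := by
          apply Subtype.ext; funext x
          rw [hμ x, hsplit, hwa1, one_mul,
            Finset.sum_eq_zero fun i hi => by rw [hz' i hi, zero_mul], add_zero]
        rw [this]; exact hf a ha
      · have hwalt : w a < 1 := lt_of_le_of_ne (by
          by_contra hcon
          push_neg at hcon
          have : ∑ i ∈ t, w i ≥ 0 := Finset.sum_nonneg hwt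
          linarith) hwa1
        set c : ℝ := 1 - w a with hc
        have hc0 : 0 < c := by simp [hc]; linarith
        have hcne : c ≠ 0 := ne_of_gt hc0
        have hsumt : ∑ i ∈ t, w i = c := by rw [hc]; linarith
        set ν : PM X := ⟨fun x => ∑ i ∈ t, (w i / c) * (f i).1 x,
          fun x => Finset.sum_nonneg fun i hi =>
            mul_nonneg (div_nonneg (hwt i hi) (le_of_lt hc0)) ((f i).2.1 x),
          by
            rw [Finset.sum_comm]
            rw [Finset.sum_congr rfl fun i _ => by
              rw [← Finset.mul_sum, (f i).2.2, mul_one]]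
            rw [← Finset.sum_div, hsumt, div_self hcne]⟩ with hν
        have hνΓ : ν ∈ Γ := ih t htcard htne (fun i => w i / c)
          (fun i hi => div_nonneg (hwt i hi) (le_of_lt hc0))
          (by rw [← Finset.sum_div, hsumt, div_self hcne]) f
          (fun i hi => hf i (Finset.mem_of_mem_erase hi)) ν (fun x => rfl)
        have hμeq : μ = mix (w a) hwa0 (le_of_lt hwalt) (f a) ν := by
          apply Subtype.ext; funext x
          show μ.1 x = w a * (f a).1 x + (1 - w a) * ν.1 x
          rw [hμ x, hsplit]
          congr 1
          rw [hν]
          show (∑ i ∈ t, w i * (f i).1 x) = c * ∑ i ∈ t, (w i / c) * (f i).1 x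
          rw [Finset.mul_sum]
          exact Finset.sum_congr rfl fun i _ => by field_simp
        rw [hμeq]
        exact hconv (f a) (hf a ha) ν hνΓ (w a) hwa0 (le_of_lt hwalt)

lemma mem_convex_sum {X : Type*} [Fintype X] (Γ : Set (PM X)) (hconv : IsConvexPM Γ)
    {ι : Type} (s : Finset ι) (hs : s.Nonempty) (w : ι → ℝ)
    (hw : ∀ i ∈ s, 0 ≤ w i) (hsum : (∑ i ∈ s, w i) = 1) (f : ι → PM X)
    (hf : ∀ i ∈ s, f i ∈ Γ) (μ : PM X)
    (hμ : ∀ x, μ.1 x = ∑ i ∈ s, w i * (f i).1 x) : μ ∈ Γ :=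
  mem_convex_sum_aux Γ hconv s.card s rfl hs w hw hsum f hf μ hμ

lemma PM_mk_apply {X : Type*} [Fintype X] (f : X → ℝ) (h) (x : X) :
    ((⟨f, h⟩ : PM X)).1 x = f x := rfl

lemma push_apply {X Y : Type*} [Fintype X] [Fintype Y] [DecidableEq Y] (f : X → Y)
    (μ : PM X) (y : Y) :
    (push f μ).1 y = ∑ x ∈ Finset.univ.filter fun x => f x = y, μ.1 x := rfl

/-- The averaged marginal of the uniform measure on a nonempty finset of words is the
average of the empirical distributions of the words. -/
lemma avgMarg_uniformOn {d n : ℕ} (hN : Nonempty (Fin d → Fin n))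
    {T : Type*} [Fintype T] [DecidableEq T] (g : T → (Fin d → ℤ))
    (W : Finset ((Fin d → Fin n) → A)) (hWne : W.Nonempty) (a : T → A) :
    (avgMarg (uniformOn W) g).1 a = ∑ x ∈ W, (W.card : ℝ)⁻¹ * (empAlong x g).1 a := by
  classical
  have hcard : (Fintype.card (Fin d → Fin n) : ℝ) ≠ 0 :=
    Nat.cast_ne_zero.mpr Fintype.card_ne_zero
  have hemp : ∀ x : (Fin d → Fin n) → A,
      (empAlong x g).1 a =
        ∑ v ∈ Finset.univ.filter (fun v => (fun t => x (cycAdd v (g t))) = a),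
          (Fintype.card (Fin d → Fin n) : ℝ)⁻¹ := by
    intro x
    unfold empAlong
    rw [dif_pos hN, push_apply]
    exact Finset.sum_congr rfl fun v _ => rfl
  have huni : ∀ x, (uniformOn W).1 x = if x ∈ W then (W.card : ℝ)⁻¹ else 0 := by
    intro x
    unfold uniformOn
    erw [dif_pos hWne, PM_mk_apply]
    by_cases hx : x ∈ W <;> simp [hx]
  have hAvg : (avgMarg (uniformOn W) g).1 a =
      (∑ v : Fin d → Fin n, (margAlong (uniformOn W) g v).1 a) /
        (Fintype.card (Fin d → Fin n)) := by
    unfold avgMarg avgPM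
    erw [dif_pos hN]
  rw [hAvg]
  have hmarg : ∀ v : Fin d → Fin n, (margAlong (uniformOn W) g v).1 a =
      ∑ x : (Fin d → Fin n) → A,
        if (fun t => x (cycAdd v (g t))) = a then (if x ∈ W then (W.card : ℝ)⁻¹ else 0)
        else 0 := by
    intro v
    unfold margAlong
    rw [push_apply, Finset.sum_filter]
    exact Finset.sum_congr rfl fun x _ => by rw [huni x]
  rw [Finset.sum_congr rfl fun v _ => hmarg v, Finset.sum_comm]
  have hswap : ∀ x : (Fin d → Fin n) → A,
      (∑ v : Fin d → Fin n,
        if (fun t => x (cycAdd v (g t))) = a then (if x ∈ W then (W.card : ℝ)⁻¹ else 0)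
        else 0)
      = if x ∈ W then (W.card : ℝ)⁻¹ *
          ((Fintype.card (Fin d → Fin n)) * (empAlong x g).1 a) else 0 := by
    intro x
    by_cases hx : x ∈ W
    · simp only [hx, if_true]
      rw [hemp x, Finset.mul_sum, ← Finset.sum_filter]
      rw [Finset.mul_sum]
      exact Finset.sum_congr rfl fun v _ => by
        rw [mul_inv_cancel₀ hcard, mul_one]
    · simp [hx]
  rw [Finset.sum_congr rfl fun x _ => hswap x, Finset.sum_ite_mem, Finset.univ_inter,
    Finset.sum_div]
  exact Finset.sum_congr rfl fun x hx => by
    rw [mul_div_assoc, mul_comm ((Fintype.card (Fin d → Fin n) : ℝ)) _, mul_div_assoc,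
      div_self hcard, mul_one]

/-- For a convex one-dimensional SCS, the averaged axial marginals of the
conditional measures `μ_{y,A}` lie in `Γ`, and so does their average over directions. -/
theorem avgMarg_muYA_mem {A : Type} [Fintype A] [DecidableEq A] [Nonempty A]
    (k : ℕ) (Γ : Set (PM (Fin k → A))) (hconv : IsConvexPM Γ) (d n : ℕ) (hd : 1 ≤ d)
    (hne : (axialBlocks Γ d n).Nonempty) (y : (Fin d → Fin n) → A)
    (hy : y ∈ axialBlocks Γ d n) (A' : Finset (Fin d → Fin n)) :
    (∀ i : Fin d, avgMarg (muYA Γ d n A' y) (axialPoint k i) ∈ Γ) ∧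
      avgPM _ (fun i : Fin d => avgMarg (muYA Γ d n A' y) (axialPoint k i)) ∈ Γ := by
  classical
  have hyblocks : ∀ i : Fin d, empAlong y (axialPoint k i) ∈ Γ :=
    (Finset.mem_filter.mp hy).2
  set W := (axialBlocks Γ d n).filter (fun x => ∀ v ∈ A', x v = y v) with hWdef
  have hyW : y ∈ W := Finset.mem_filter.mpr ⟨hy, fun v _ => rfl⟩
  have hWne : W.Nonempty := ⟨y, hyW⟩
  have hWcard : (W.card : ℝ) ≠ 0 :=
    Nat.cast_ne_zero.mpr (Finset.card_ne_zero_of_mem hyW)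
  have hmu : muYA Γ d n A' y = uniformOn W := rfl
  have hmem : ∀ i : Fin d, avgMarg (muYA Γ d n A' y) (axialPoint k i) ∈ Γ := by
    intro i
    by_cases hN : Nonempty (Fin d → Fin n)
    · refine mem_convex_sum Γ hconv W hWne (fun _ => (W.card : ℝ)⁻¹)
        (fun _ _ => by positivity)
        (by rw [Finset.sum_const, nsmul_eq_mul, mul_inv_cancel₀ hWcard])
        (fun x => empAlong x (axialPoint k i))
        (fun x hx => ?_) _ (fun b => ?_)
      · have hx' : x ∈ axialBlocks Γ d n := (Finset.mem_filter.mp hx).1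
        exact (Finset.mem_filter.mp hx').2 i
      · rw [hmu]; exact avgMarg_uniformOn hN (axialPoint k i) W hWne b
    · have h1 : avgMarg (muYA Γ d n A' y) (axialPoint k i) = uniformPM _ := by
        unfold avgMarg avgPM; erw [dif_neg hN]
      have h2 : empAlong y (axialPoint k i) = uniformPM _ := by
        unfold empAlong; rw [dif_neg hN]
      rw [h1, ← h2]
      exact hyblocks i
  refine ⟨hmem, ?_⟩
  haveI hdne : Nonempty (Fin d) := ⟨⟨0, hd⟩⟩
  have hdcard : (Fintype.card (Fin d) : ℝ) ≠ 0 :=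
    Nat.cast_ne_zero.mpr Fintype.card_ne_zero
  refine mem_convex_sum Γ hconv Finset.univ Finset.univ_nonempty
    (fun _ => (Fintype.card (Fin d) : ℝ)⁻¹) (fun _ _ => by positivity)
    (by rw [Finset.sum_const, Finset.card_univ, nsmul_eq_mul, mul_inv_cancel₀ hdcard])
    (fun i => avgMarg (muYA Γ d n A' y) (axialPoint k i)) (fun i _ => hmem i) _
    (fun x => ?_)
  have hA : (avgPM (Fin k → A) fun i => avgMarg (muYA Γ d n A' y) (axialPoint k i)).1 x =
      (∑ i, (avgMarg (muYA Γ d n A' y) (axialPoint k i)).1 x) / Fintype.card (Fin d) := by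
    unfold avgPM
    erw [dif_pos hdne]
  rw [hA, Finset.sum_div]
  exact Finset.sum_congr rfl fun i _ => by rw [div_eq_inv_mul]


end SCS
end
end
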